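/- arXiv:math/0504247 — 2 statements merged into one kernel-verified Lean document; each statement's English description precedes it below -/
import Mathlib

section
/- Suppose each p_e|_{K_{i(e)}} is Dini-continuous and bounded below by δ > 0. Then for every Borel probability measure ν on K and for all choices x_i, y_i ∈ K_i: (i) F_{x_1...x_N} is defined Φ(ν)-almost everywhere; (ii) F_{x_1...x_N} = F_{y_1...y_N} Φ(ν)-almost everywhere. -/
open MeasureTheory ENNReal Filter

/-- A contractive Markov system on a metric space `K` with vertex type `V` and edge type `E`. -/
structure CMS (E V K : Type*) [Fintype E] [MetricSpace K] [MeasurableSpace K] where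
  i : E → V
  t : E → V
  Ks : V → Set K
  w : E → K → K
  p : E → K → ℝ
  a : ℝ
  ha0 : 0 < a
  ha1 : a < 1
  Ks_nonempty : ∀ v, (Ks v).Nonempty
  Ks_meas : ∀ v, MeasurableSet (Ks v)
  Ks_disj : ∀ v v', v ≠ v' → Disjoint (Ks v) (Ks v')
  Ks_cover : ∀ x : K, ∃ v, x ∈ Ks v
  w_meas : ∀ e, Measurable (w e)
  p_meas : ∀ e, Measurable (p e)
  p_nonneg : ∀ e x, 0 ≤ p e x
  p_sum : ∀ x : K, ∑ e, p e x = 1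
  p_zero : ∀ e, ∀ x ∉ Ks (i e), p e x = 0
  w_maps : ∀ e, Set.MapsTo (w e) (Ks (i e)) (Ks (t e))
  contractive : ∀ v, ∀ x ∈ Ks v, ∀ y ∈ Ks v,
      ∑ e, p e x * dist (w e x) (w e y) ≤ a * dist x y

variable {E V K : Type*} [Fintype E] [MetricSpace K] [MeasurableSpace K]

/-- `S.orbit e m x j = w_{e_{m+j}} ∘ ⋯ ∘ w_{e_m} (x)`. -/
def CMS.orbit (S : CMS E V K) (e : ℤ → E) (m : ℤ) (x : K) : ℕ → K
  | 0 => S.w (e m) x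
  | j + 1 => S.w (e (m + j + 1)) (S.orbit e m x j)

/-- `S.pathProb e m x j = p_{e_m}(x) p_{e_{m+1}}(w_{e_m}x) ⋯ p_{e_{m+j}}(w_{e_{m+j-1}}∘⋯∘w_{e_m}x)`. -/
def CMS.pathProb (S : CMS E V K) (e : ℤ → E) (m : ℤ) (x : K) : ℕ → ℝ
  | 0 => S.p (e m) x
  | j + 1 => S.pathProb e m x j * S.p (e (m + j + 1)) (S.orbit e m x j)

/-- The σ-algebra `𝒜_m` on `Σ = E^ℤ` generated by the coordinates with index `≥ m`. -/
def Am (E : Type*) (m : ℤ) : MeasurableSpace (ℤ → E) :=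
  ⨆ (i : ℤ) (_ : m ≤ i), MeasurableSpace.comap (fun σ => σ i) ⊤

/-- The cylinder `_m[e_m, …, e_{m+j}]`. -/
def cyl (m : ℤ) (j : ℕ) (e : ℤ → E) : Set (ℤ → E) :=
  {σ | ∀ k : ℤ, m ≤ k → k ≤ m + j → σ k = e k}

/-- `P` is the family of Markov measures `P^m_x` on `(Σ, 𝒜_m)` of the CMS `S`. -/
def IsKernel (S : CMS E V K) (P : ∀ m : ℤ, K → @Measure (ℤ → E) (Am E m)) : Prop :=
  (∀ (m : ℤ) (x : K), @IsProbabilityMeasure _ (Am E m) (P m x)) ∧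
  ∀ (m : ℤ) (x : K) (e : ℤ → E) (j : ℕ),
    P m x (cyl m j e) = ENNReal.ofReal (S.pathProb e m x j)

/-- The `m`-th lift `Φ_m(ν)(A) = ∫ P^m_x(A) dν(x)`. -/
noncomputable def liftMeas (P : ∀ m : ℤ, K → @Measure (ℤ → E) (Am E m))
    (m : ℤ) (ν : Measure K) (A : Set (ℤ → E)) : ℝ≥0∞ :=
  ∫⁻ x, P m x A ∂ν

/-- The lift outer measure `Φ(ν)`, via coverings `B ⊆ ⋃_{m ≤ 0} A_m`, `A_m ∈ 𝒜_m` (indexed by `m = -n`). -/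
noncomputable def PhiM (P : ∀ m : ℤ, K → @Measure (ℤ → E) (Am E m))
    (ν : Measure K) (B : Set (ℤ → E)) : ℝ≥0∞ :=
  ⨅ (A : ℕ → Set (ℤ → E)) (_ : ∀ n : ℕ, MeasurableSet[Am E (-(n : ℤ))] (A n))
    (_ : B ⊆ ⋃ n, A n), ∑' n : ℕ, liftMeas P (-(n : ℤ)) ν (A n)

/-- `Y^{x_1…x_N}_{m0}(σ) = w_{σ_0}∘⋯∘w_{σ_m}(x_{i(σ_m)})`. -/
noncomputable def CMS.Y (S : CMS E V K) (xs : V → K) (m : ℤ) (σ : ℤ → E) : K :=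
  S.orbit σ m (xs (S.i (σ m))) (-m).toNat

/-- The uniform measure `(1/N) ∑_i δ_{x_i}`. -/
noncomputable def unif [Fintype V] (xs : V → K) : Measure K :=
  ((Fintype.card V : ℝ≥0∞))⁻¹ • ∑ v : V, Measure.dirac (xs v)

/-- The measure `P^m_{x_1…x_N} = Φ_m((1/N)∑δ_{x_i}) = (1/N)∑_i P^m_{x_i}`. -/
noncomputable def PmMix [Fintype V] (P : ∀ m : ℤ, K → @Measure (ℤ → E) (Am E m))
    (xs : V → K) (m : ℤ) : @Measure (ℤ → E) (Am E m) :=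
  ((Fintype.card V : ℝ≥0∞))⁻¹ • ∑ v : V, P m (xs v)

/-! Contractivity on average gives `E dist(Y^x_{-n}, Z) = O(aⁿ)` under every `P^{-m}_x` with
`m > n`, where `Z` is the chain started at `x` at time `-m`: after one step the two points lie in
the same `K_v`, and the distance of the chain to the anchors `x_v` is a Lyapunov function. By
Markov's inequality, `Y^x_{-n}` moves by more than `√aⁿ`, or differs from `Y^y_{-n}` by that much,
with probability `O(√aⁿ)`. These events are measurable at level `-(n+1)`; grouping them into
blocks between the terms of a sparse sequence of levels covers their limsup set with arbitrarily
small `Φ(ν)`-weight, a Borel–Cantelli lemma for the lift outer measure. Off the limsup set both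
sequences are Cauchy with the same limit. -/

open Stream' Topology

section word

variable [Inhabited E]

def padWord {n : ℕ} (r : Fin n → E) : Stream' E := List.ofFn r ++ₛ const default

omit [Fintype E] in
lemma padWord_cons {n : ℕ} (e : E) (r : Fin n → E) :
    padWord (Fin.cons e r : Fin (n + 1) → E) = e :: padWord r := by
  simp [padWord, List.ofFn_succ, cons_append_stream]

omit [Fintype E] in
lemma padWord_apply {n : ℕ} (r : Fin n → E) {k : ℕ} (hk : k < n) : padWord r k = r ⟨k, hk⟩ := by
  change (List.ofFn r ++ₛ const default).get k = _
  rw [Stream'.get_append_left _ _ _ (by simpa using hk), List.getElem_ofFn]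

end word

def window (m : ℤ) (σ : ℤ → E) : Stream' E := fun k => σ (m + k)

omit [Fintype E] in
lemma window_drop (m : ℤ) (s : ℕ) (σ : ℤ → E) : (window m σ).drop s = window (m + s) σ := by
  ext k
  simp only [window, Stream'.drop, Stream'.get]
  congr 1
  push_cast
  ring

def placeWord [Inhabited E] (m : ℤ) {n : ℕ} (r : Fin n → E) : ℤ → E :=
  fun k => padWord r (k - m).toNat

omit [Fintype E] in
lemma window_placeWord [Inhabited E] (m : ℤ) {n : ℕ} (r : Fin n → E) :
    window m (placeWord m r) = padWord r := by
  ext k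
  simp [window, placeWord, Stream'.get]

omit [Fintype E] in
lemma Am_antitone {m m' : ℤ} (h : m ≤ m') : Am E m' ≤ Am E m :=
  iSup₂_le fun i hi => le_iSup₂_of_le (f := fun i (_ : m ≤ i) =>
    MeasurableSpace.comap (fun σ : ℤ → E => σ i) ⊤) i (h.trans hi) le_rfl

omit [Fintype E] in
lemma measurableSet_cyl (m : ℤ) (j : ℕ) (e : ℤ → E) : MeasurableSet[Am E m] (cyl m j e) := by
  have hcyl : cyl m j e = ⋂ (k : ℤ) (_ : m ≤ k) (_ : k ≤ m + j), (fun σ => σ k) ⁻¹' {e k} := by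
    ext σ
    simp [cyl]
  rw [hcyl]
  refine .iInter fun k => .iInter fun hk => .iInter fun _ => ?_
  exact le_iSup₂ (f := fun i (_ : m ≤ i) => MeasurableSpace.comap (fun σ : ℤ → E => σ i) ⊤)
    k hk _ ⟨{e k}, trivial, rfl⟩

omit [Fintype E] in
lemma mem_cyl_iff_window (m : ℤ) (j : ℕ) (e σ : ℤ → E) :
    σ ∈ cyl m j e ↔ ∀ k < j + 1, window m σ k = window m e k := by
  refine ⟨fun h k hk => h _ (by omega) (by omega), fun h k hk1 hk2 => ?_⟩
  obtain ⟨t, rfl⟩ : ∃ t : ℕ, k = m + t := ⟨(k - m).toNat, by omega⟩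
  exact h t (by omega)

section window

variable [Inhabited E]

open Classical in
lemma preimage_window_eq_biUnion_cyl (m : ℤ) (j : ℕ) {A : Set (Stream' E)}
    (hA : DependsOn (· ∈ A) (Set.Iio (j + 1))) :
    window m ⁻¹' A = ⋃ r ∈ Finset.univ.filter (fun r : Fin (j + 1) → E => padWord r ∈ A),
      cyl m j (placeWord m r) := by
  ext σ
  simp only [Set.mem_preimage, Set.mem_iUnion, Finset.mem_filter, Finset.mem_univ, true_and,
    exists_prop, mem_cyl_iff_window, window_placeWord]
  constructor
  · intro hσ
    have hpad : ∀ k < j + 1, window m σ k = padWord (fun i : Fin (j + 1) => window m σ i) k :=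
      fun k hk => (padWord_apply (fun i : Fin (j + 1) => window m σ i) hk).symm
    exact ⟨_, Eq.mp (hA hpad) hσ, hpad⟩
  · rintro ⟨r, hr, hσr⟩
    exact Eq.mpr (hA fun k hk => hσr k hk) hr

lemma measurableSet_preimage_window (m : ℤ) (j : ℕ) {A : Set (Stream' E)}
    (hA : DependsOn (· ∈ A) (Set.Iio (j + 1))) : MeasurableSet[Am E m] (window m ⁻¹' A) := by
  classical
  rw [preimage_window_eq_biUnion_cyl m j hA]
  exact Finset.measurableSet_biUnion _ fun r _ => measurableSet_cyl _ _ _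

end window

namespace CMS

variable (S : CMS E V K)

def comp : ℕ → Stream' E → K → K
  | 0, _, x => x
  | n + 1, q, x => comp n q.tail (S.w q.head x)

def wordProb : ℕ → Stream' E → K → ℝ
  | 0, _, _ => 1
  | n + 1, q, x => S.p q.head x * wordProb n q.tail (S.w q.head x)

/-- The word is padded with `default`; only functions of the first `n` letters are ever
integrated, so the padding is never seen. -/
def expect [Inhabited E] : ℕ → K → (Stream' E → ℝ) → ℝ
  | 0, _, F => F (const default)
  | n + 1, x, F => ∑ e, S.p e x * expect n (S.w e x) (fun q => F (e :: q))

lemma comp_add (n k : ℕ) (q : Stream' E) (x : K) :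
    S.comp (n + k) q x = S.comp k (q.drop n) (S.comp n q x) := by
  induction n generalizing q x with
  | zero => rw [Nat.zero_add]; rfl
  | succ n ih =>
    rw [Nat.add_right_comm]
    exact (ih q.tail _).trans (by rw [drop_tail']; rfl)

lemma comp_congr {n : ℕ} {q q' : Stream' E} (h : ∀ k < n, q.get k = q'.get k) (x : K) :
    S.comp n q x = S.comp n q' x := by
  induction n generalizing q q' x with
  | zero => rfl
  | succ n ih =>
    have h0 : q.head = q'.head := h 0 n.succ_pos
    simp only [comp, h0]
    exact ih (fun k hk => h (k + 1) (by omega)) _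

lemma wordProb_succ_cons (n : ℕ) (e : E) (q : Stream' E) (x : K) :
    S.wordProb (n + 1) (e :: q) x = S.p e x * S.wordProb n q (S.w e x) := rfl

lemma wordProb_nonneg (n : ℕ) (q : Stream' E) (x : K) : 0 ≤ S.wordProb n q x := by
  induction n generalizing q x with
  | zero => exact zero_le_one
  | succ n ih => exact mul_nonneg (S.p_nonneg _ _) (ih _ _)

lemma wordProb_add (n k : ℕ) (q : Stream' E) (x : K) :
    S.wordProb (n + k) q x = S.wordProb n q x * S.wordProb k (q.drop n) (S.comp n q x) := by
  induction n generalizing q x with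
  | zero => rw [Nat.zero_add]; exact (one_mul _).symm
  | succ n ih =>
    rw [Nat.add_right_comm]
    change S.p q.head x * S.wordProb (n + k) q.tail _ = S.p q.head x * _ * _
    rw [ih, mul_assoc]
    rfl

lemma orbit_eq_comp (σ : ℤ → E) (m : ℤ) (x : K) (j : ℕ) :
    S.orbit σ m x j = S.comp (j + 1) (window m σ) x := by
  induction j with
  | zero => simp [orbit, comp, window, Stream'.head, Stream'.get]
  | succ j ih =>
    rw [S.comp_add (j + 1) 1, window_drop, orbit, ih]
    show _ = S.w (σ (m + ((j + 1 : ℕ) : ℤ) + ((0 : ℕ) : ℤ))) _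
    congr 2
    push_cast
    ring

lemma pathProb_eq_wordProb (σ : ℤ → E) (m : ℤ) (x : K) (j : ℕ) :
    S.pathProb σ m x j = S.wordProb (j + 1) (window m σ) x := by
  induction j with
  | zero => simp [pathProb, wordProb, window, Stream'.head, Stream'.get]
  | succ j ih =>
    rw [S.wordProb_add (j + 1) 1, window_drop, pathProb, ih, S.orbit_eq_comp]
    show _ = _ * (S.p (σ (m + ((j + 1 : ℕ) : ℤ) + ((0 : ℕ) : ℤ))) _ * 1)
    rw [mul_one]
    congr 3
    push_cast
    ring

section expect

variable [Inhabited E]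

lemma expect_succ (n : ℕ) (x : K) (F : Stream' E → ℝ) :
    S.expect (n + 1) x F = ∑ e, S.p e x * S.expect n (S.w e x) (fun q => F (e :: q)) := rfl

lemma expect_mono {n : ℕ} {x : K} {F G : Stream' E → ℝ} (h : ∀ q, F q ≤ G q) :
    S.expect n x F ≤ S.expect n x G := by
  induction n generalizing x F G with
  | zero => exact h _
  | succ n ih =>
    exact Finset.sum_le_sum fun e _ =>
      mul_le_mul_of_nonneg_left (ih fun q => h _) (S.p_nonneg _ _)

lemma expect_add (n : ℕ) (x : K) (F G : Stream' E → ℝ) :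
    S.expect n x (fun q => F q + G q) = S.expect n x F + S.expect n x G := by
  induction n generalizing x F G with
  | zero => rfl
  | succ n ih =>
    simp only [expect_succ, ih, mul_add, Finset.sum_add_distrib]

lemma expect_const_mul (n : ℕ) (x : K) (r : ℝ) (F : Stream' E → ℝ) :
    S.expect n x (fun q => r * F q) = r * S.expect n x F := by
  induction n generalizing x F with
  | zero => rfl
  | succ n ih =>
    simp only [expect_succ, ih, Finset.mul_sum]
    exact Finset.sum_congr rfl fun e _ => by ring

/-- The Markov property of `expect`. -/
lemma expect_comp_drop (s k : ℕ) (x : K) (G : K → Stream' E → ℝ) :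
    S.expect (k + s) x (fun q => G (S.comp s q x) (q.drop s)) =
      S.expect s x (fun q => S.expect k (S.comp s q x) (G (S.comp s q x))) := by
  induction s generalizing x with
  | zero => rfl
  | succ s ih => exact Finset.sum_congr rfl fun e _ => congrArg _ (ih _)

lemma expect_eq_sum (n : ℕ) (x : K) (F : Stream' E → ℝ) :
    S.expect n x F = ∑ r : Fin n → E, S.wordProb n (padWord r) x * F (padWord r) := by
  induction n generalizing x F with
  | zero => simp [expect, wordProb, padWord]
  | succ n ih =>
    rw [expect_succ, ← (Fin.consEquiv fun _ : Fin (n + 1) => E).sum_comp, Fintype.sum_prod_type]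
    refine Finset.sum_congr rfl fun e _ => ?_
    rw [ih, Finset.mul_sum]
    refine Finset.sum_congr rfl fun r _ => ?_
    rw [show Fin.consEquiv (fun _ => E) (e, r) = Fin.cons e r from rfl, padWord_cons,
      wordProb_succ_cons, mul_assoc]

lemma measure_preimage_window {P : ∀ m : ℤ, K → @Measure (ℤ → E) (Am E m)} (hP : IsKernel S P)
    (m : ℤ) (j : ℕ) (x : K) {A : Set (Stream' E)} (hA : DependsOn (· ∈ A) (Set.Iio (j + 1))) :
    P m x (window m ⁻¹' A) = ENNReal.ofReal (S.expect (j + 1) x (A.indicator 1)) := by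
  classical
  have hdisj : (↑(Finset.univ.filter fun r : Fin (j + 1) → E => padWord r ∈ A) :
      Set (Fin (j + 1) → E)).PairwiseDisjoint fun r => cyl m j (placeWord m r) := by
    refine fun r _ r' _ hne => Set.disjoint_left.2 fun σ h h' => hne (funext fun i => ?_)
    rw [mem_cyl_iff_window, window_placeWord] at h h'
    rw [← padWord_apply r i.2, ← padWord_apply r' i.2, ← h i i.2, ← h' i i.2]
  rw [preimage_window_eq_biUnion_cyl m j hA,
    measure_biUnion_finset hdisj fun r _ => measurableSet_cyl _ _ _]
  calc ∑ r ∈ Finset.univ.filter (fun r : Fin (j + 1) → E => padWord r ∈ A),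
        P m x (cyl m j (placeWord m r))
      = ∑ r ∈ Finset.univ.filter (fun r : Fin (j + 1) → E => padWord r ∈ A),
          ENNReal.ofReal (S.wordProb (j + 1) (padWord r) x) :=
        Finset.sum_congr rfl fun r _ => by
          rw [hP.2, S.pathProb_eq_wordProb, window_placeWord]
    _ = ENNReal.ofReal (S.expect (j + 1) x (A.indicator 1)) := by
        rw [← ENNReal.ofReal_sum_of_nonneg fun r _ => S.wordProb_nonneg _ _ _, S.expect_eq_sum,
          Finset.sum_filter]
        congr 1
        refine Finset.sum_congr rfl fun r _ => ?_
        by_cases hr : padWord r ∈ A <;> simp [hr]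

end expect

lemma vertex_unique {x : K} {v v' : V} (hv : x ∈ S.Ks v) (hv' : x ∈ S.Ks v') : v = v' :=
  by_contra fun h => (S.Ks_disj v v' h).ne_of_mem hv hv' rfl

noncomputable def vertexOf (x : K) : V := (S.Ks_cover x).choose

lemma mem_Ks_vertexOf (x : K) : x ∈ S.Ks (S.vertexOf x) := (S.Ks_cover x).choose_spec

lemma sum_p_mul_le_sum_p_mul {x : K} {f g : E → ℝ} (h : ∀ e, x ∈ S.Ks (S.i e) → f e ≤ g e) :
    ∑ e, S.p e x * f e ≤ ∑ e, S.p e x * g e := by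
  refine Finset.sum_le_sum fun e _ => ?_
  by_cases hx : x ∈ S.Ks (S.i e)
  · exact mul_le_mul_of_nonneg_left (h e hx) (S.p_nonneg e x)
  · simp [S.p_zero e x hx]

lemma expect_dist_comp_le [Inhabited E] (n : ℕ) {v : V} {x u : K} (hx : x ∈ S.Ks v)
    (hu : u ∈ S.Ks v) :
    S.expect n x (fun q => dist (S.comp n q x) (S.comp n q u)) ≤ S.a ^ n * dist x u := by
  induction n generalizing v x u with
  | zero => simp [expect, comp]
  | succ n ih =>
    calc S.expect (n + 1) x (fun q => dist (S.comp (n + 1) q x) (S.comp (n + 1) q u))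
        ≤ ∑ e, S.p e x * (S.a ^ n * dist (S.w e x) (S.w e u)) := by
          refine S.sum_p_mul_le_sum_p_mul fun e hxe => ?_
          have hue : u ∈ S.Ks (S.i e) := S.vertex_unique hx hxe ▸ hu
          exact ih (S.w_maps e hxe) (S.w_maps e hue)
      _ = S.a ^ n * ∑ e, S.p e x * dist (S.w e x) (S.w e u) := by
          rw [Finset.mul_sum]; exact Finset.sum_congr rfl fun e _ => by ring
      _ ≤ S.a ^ n * (S.a * dist x u) :=
          mul_le_mul_of_nonneg_left (S.contractive v x hx u hu) (pow_nonneg S.ha0.le n)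
      _ = S.a ^ (n + 1) * dist x u := by ring

noncomputable def anchorDist (xs : V → K) (x : K) : ℝ := dist x (xs (S.vertexOf x))

noncomputable def readout (xs : V → K) (n : ℕ) (q : Stream' E) : K :=
  S.comp (n + 1) q (xs (S.i q.head))

section anchor

variable {xs : V → K} (hxs : ∀ v, xs v ∈ S.Ks v)
include hxs

lemma sum_p_mul_dist_w_anchor_le (x : K) :
    ∑ e, S.p e x * dist (S.w e x) (S.w e (xs (S.i e))) ≤ S.a * S.anchorDist xs x := by
  calc ∑ e, S.p e x * dist (S.w e x) (S.w e (xs (S.i e)))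
      ≤ ∑ e, S.p e x * dist (S.w e x) (S.w e (xs (S.vertexOf x))) :=
        S.sum_p_mul_le_sum_p_mul fun e hxe => by
          rw [S.vertex_unique hxe (S.mem_Ks_vertexOf x)]
    _ ≤ S.a * S.anchorDist xs x :=
        S.contractive _ x (S.mem_Ks_vertexOf x) _ (hxs _)

lemma expect_dist_readout_le [Inhabited E] (n : ℕ) (z : K) :
    S.expect (n + 1) z (fun q => dist (S.readout xs n q) (S.comp (n + 1) q z)) ≤
      S.a ^ (n + 1) * S.anchorDist xs z := by
  calc S.expect (n + 1) z (fun q => dist (S.readout xs n q) (S.comp (n + 1) q z))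
      ≤ ∑ e, S.p e z * (S.a ^ n * dist (S.w e z) (S.w e (xs (S.i e)))) :=
        S.sum_p_mul_le_sum_p_mul fun e hze =>
          (S.expect_mono fun q => (dist_comm _ _).le).trans
            (S.expect_dist_comp_le n (S.w_maps e hze) (S.w_maps e (hxs _)))
    _ = S.a ^ n * ∑ e, S.p e z * dist (S.w e z) (S.w e (xs (S.i e))) := by
        rw [Finset.mul_sum]
        exact Finset.sum_congr rfl fun e _ => by ring
    _ ≤ S.a ^ n * (S.a * S.anchorDist xs z) :=
        mul_le_mul_of_nonneg_left (S.sum_p_mul_dist_w_anchor_le hxs z) (pow_nonneg S.ha0.le n)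
    _ = S.a ^ (n + 1) * S.anchorDist xs z := by ring

end anchor

lemma Y_eq_readout (xs : V → K) (n s : ℕ) (σ : ℤ → E) :
    S.Y xs (-(n : ℤ)) σ = S.readout xs n ((window (-((n + s : ℕ) : ℤ)) σ).drop s) := by
  rw [window_drop, show -((n + s : ℕ) : ℤ) + s = -n by push_cast; ring, Y,
    S.orbit_eq_comp, readout]
  simp [window, Stream'.head, Stream'.get]

noncomputable def deviation (xs ys : V → K) (n : ℕ) (σ : ℤ → E) : ℝ :=
  dist (S.Y xs (-(n : ℤ)) σ) (S.Y xs (-((n + 1 : ℕ) : ℤ)) σ) +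
    dist (S.Y xs (-(n : ℤ)) σ) (S.Y ys (-(n : ℤ)) σ)

noncomputable def deviationWord (xs ys : V → K) (n s : ℕ) (q : Stream' E) : ℝ :=
  dist (S.readout xs n (q.drop (s + 1))) (S.readout xs (n + 1) (q.drop s)) +
    dist (S.readout xs n (q.drop (s + 1))) (S.readout ys n (q.drop (s + 1)))

lemma deviation_eq_deviationWord (xs ys : V → K) (n s : ℕ) (σ : ℤ → E) :
    S.deviation xs ys n σ = S.deviationWord xs ys n s (window (-((n + 1 + s : ℕ) : ℤ)) σ) := by
  rw [deviation, S.Y_eq_readout xs n (s + 1), S.Y_eq_readout xs (n + 1) s,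
    S.Y_eq_readout ys n (s + 1), show n + (s + 1) = n + 1 + s by omega, deviationWord]

lemma dependsOn_readout_drop (xs : V → K) (n s : ℕ) :
    DependsOn (fun q : Stream' E => S.readout xs n (q.drop s)) (Set.Iio (n + 1 + s)) := by
  rintro (q : Stream' E) (q' : Stream' E) h
  have hdrop : ∀ k < n + 1, (q.drop s).get k = (q'.drop s).get k :=
    fun k hk => h (k + s) (by simp only [Set.mem_Iio]; omega)
  simp only [readout]
  rw [show (q.drop s).head = (q'.drop s).head from hdrop 0 n.succ_pos, S.comp_congr hdrop]

lemma dependsOn_deviationWord (xs ys : V → K) (n s : ℕ) :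
    DependsOn (S.deviationWord xs ys n s) (Set.Iio (n + 1 + s + 1)) := by
  intro q q' h
  have h₁ := S.dependsOn_readout_drop xs n (s + 1) fun k hk => h k (by simp at hk ⊢; omega)
  have h₂ := S.dependsOn_readout_drop xs (n + 1) s fun k hk => h k (by simp at hk ⊢; omega)
  have h₃ := S.dependsOn_readout_drop ys n (s + 1) fun k hk => h k (by simp at hk ⊢; omega)
  simp only at h₁ h₂ h₃
  simp only [deviationWord, h₁, h₂, h₃]

lemma setOf_lt_deviation_eq_preimage_window (xs ys : V → K) (c : ℝ) (n s : ℕ) :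
    {σ | c ^ n < S.deviation xs ys n σ} =
      window (-((n + 1 + s : ℕ) : ℤ)) ⁻¹' {q | c ^ n < S.deviationWord xs ys n s q} := by
  ext σ
  simp [S.deviation_eq_deviationWord xs ys n s]

lemma dependsOn_mem_setOf_lt_deviationWord (xs ys : V → K) (c : ℝ) (n s : ℕ) :
    DependsOn (· ∈ {q | c ^ n < S.deviationWord xs ys n s q}) (Set.Iio (n + 1 + s + 1)) :=
  fun _ _ h => by
    change (c ^ n < _) = (c ^ n < _)
    rw [S.dependsOn_deviationWord xs ys n s h]

lemma measurableSet_setOf_lt_deviation [Inhabited E] (xs ys : V → K) (c : ℝ) (n s : ℕ) :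
    MeasurableSet[Am E (-((n + 1 + s : ℕ) : ℤ))] {σ | c ^ n < S.deviation xs ys n σ} := by
  rw [S.setOf_lt_deviation_eq_preimage_window xs ys]
  exact measurableSet_preimage_window _ _ (S.dependsOn_mem_setOf_lt_deviationWord xs ys c n s)

section lyapunov

variable [Fintype V]

noncomputable def anchorSpread (xs : V → K) : ℝ := ∑ e, ∑ v, dist (S.w e (xs (S.i e))) (xs v)

noncomputable def anchorBound (xs : V → K) (x : K) : ℝ :=
  S.anchorDist xs x + S.anchorSpread xs / (1 - S.a)

lemma anchorSpread_nonneg (xs : V → K) : 0 ≤ S.anchorSpread xs :=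
  Finset.sum_nonneg fun _ _ => Finset.sum_nonneg fun _ _ => dist_nonneg

lemma anchorBound_nonneg (xs : V → K) (x : K) : 0 ≤ S.anchorBound xs x :=
  add_nonneg dist_nonneg (div_nonneg (S.anchorSpread_nonneg xs) (sub_pos.2 S.ha1).le)

lemma anchorDist_le_sum (xs : V → K) (x : K) : S.anchorDist xs x ≤ ∑ v, dist x (xs v) :=
  Finset.single_le_sum (fun _ _ => dist_nonneg) (Finset.mem_univ _)

variable {xs : V → K} (hxs : ∀ v, xs v ∈ S.Ks v)
include hxs

/-- The drift inequality making `anchorDist xs` a Lyapunov function of the chain. -/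
lemma sum_p_mul_anchorDist_w_le (x : K) :
    ∑ e, S.p e x * S.anchorDist xs (S.w e x) ≤ S.a * S.anchorDist xs x + S.anchorSpread xs := by
  have hspread : ∀ e u, dist (S.w e (xs (S.i e))) (xs u) ≤ S.anchorSpread xs := fun e u =>
    (Finset.single_le_sum (fun u _ => dist_nonneg) (Finset.mem_univ u)).trans
      (Finset.single_le_sum (f := fun e => ∑ u, dist (S.w e (xs (S.i e))) (xs u))
        (fun _ _ => Finset.sum_nonneg fun _ _ => dist_nonneg) (Finset.mem_univ e))
  calc ∑ e, S.p e x * S.anchorDist xs (S.w e x)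
      ≤ ∑ e, S.p e x * (dist (S.w e x) (S.w e (xs (S.i e))) + S.anchorSpread xs) :=
        S.sum_p_mul_le_sum_p_mul fun e _ =>
          (dist_triangle _ _ _).trans (add_le_add le_rfl (hspread _ _))
    _ = ∑ e, S.p e x * dist (S.w e x) (S.w e (xs (S.i e))) + S.anchorSpread xs := by
        simp only [mul_add, Finset.sum_add_distrib, ← Finset.sum_mul, S.p_sum, one_mul]
    _ ≤ S.a * S.anchorDist xs x + S.anchorSpread xs :=
        add_le_add (S.sum_p_mul_dist_w_anchor_le hxs x) le_rfl

variable [Inhabited E]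

lemma expect_anchorDist_comp_le_geometric (n : ℕ) (x : K) :
    S.expect n x (fun q => S.anchorDist xs (S.comp n q x)) ≤
      S.a ^ n * S.anchorDist xs x + (1 - S.a ^ n) / (1 - S.a) * S.anchorSpread xs := by
  have ha : 0 < 1 - S.a := sub_pos.2 S.ha1
  induction n generalizing x with
  | zero => simp [expect, comp]
  | succ n ih =>
    calc S.expect (n + 1) x (fun q => S.anchorDist xs (S.comp (n + 1) q x))
        ≤ ∑ e, S.p e x * (S.a ^ n * S.anchorDist xs (S.w e x)
            + (1 - S.a ^ n) / (1 - S.a) * S.anchorSpread xs) :=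
          S.sum_p_mul_le_sum_p_mul fun e _ => ih _
      _ = S.a ^ n * ∑ e, S.p e x * S.anchorDist xs (S.w e x)
            + (1 - S.a ^ n) / (1 - S.a) * S.anchorSpread xs := by
          simp only [mul_add, Finset.sum_add_distrib, ← Finset.sum_mul, S.p_sum, one_mul,
            Finset.mul_sum]
          congr 1
          exact Finset.sum_congr rfl fun e _ => by ring
      _ ≤ S.a ^ n * (S.a * S.anchorDist xs x + S.anchorSpread xs)
            + (1 - S.a ^ n) / (1 - S.a) * S.anchorSpread xs := by
          gcongr
          · exact pow_nonneg S.ha0.le n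
          · exact S.sum_p_mul_anchorDist_w_le hxs x
      _ = S.a ^ (n + 1) * S.anchorDist xs x
            + (1 - S.a ^ (n + 1)) / (1 - S.a) * S.anchorSpread xs := by
          field_simp
          ring

lemma expect_anchorDist_comp_le (n : ℕ) (x : K) :
    S.expect n x (fun q => S.anchorDist xs (S.comp n q x)) ≤ S.anchorBound xs x := by
  refine (S.expect_anchorDist_comp_le_geometric hxs n x).trans (add_le_add ?_ ?_)
  · exact mul_le_of_le_one_left dist_nonneg (pow_le_one₀ S.ha0.le S.ha1.le)
  · rw [div_mul_eq_mul_div]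
    gcongr
    · exact (sub_pos.2 S.ha1).le
    · exact mul_le_of_le_one_left (S.anchorSpread_nonneg xs)
        (sub_le_self _ (pow_nonneg S.ha0.le n))

lemma expect_dist_readout_drop_le (n s : ℕ) (x : K) :
    S.expect (n + 1 + s) x (fun q => dist (S.readout xs n (q.drop s)) (S.comp (n + 1 + s) q x)) ≤
      S.a ^ (n + 1) * S.anchorBound xs x := by
  simp_rw [add_comm (n + 1) s, S.comp_add s (n + 1), ← add_comm (n + 1) s]
  rw [S.expect_comp_drop s (n + 1) x fun z r => dist (S.readout xs n r) (S.comp (n + 1) r z)]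
  calc _ ≤ S.expect s x (fun q => S.a ^ (n + 1) * S.anchorDist xs (S.comp s q x)) :=
        S.expect_mono fun q => S.expect_dist_readout_le hxs n _
    _ ≤ S.a ^ (n + 1) * S.anchorBound xs x := by
        rw [S.expect_const_mul]
        exact mul_le_mul_of_nonneg_left (S.expect_anchorDist_comp_le hxs s x)
          (pow_nonneg S.ha0.le _)

end lyapunov

section markov

variable [Fintype V] [Inhabited E] {xs ys : V → K} (hxs : ∀ v, xs v ∈ S.Ks v)
  (hys : ∀ v, ys v ∈ S.Ks v)
include hxs hys

lemma expect_deviationWord_le (n s : ℕ) (x : K) :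
    S.expect (n + 1 + s + 1) x (S.deviationWord xs ys n s) ≤
      S.a ^ n * (3 * S.anchorBound xs x + S.anchorBound ys x) := by
  have readout_le : ∀ {ws : V → K}, (∀ v, ws v ∈ S.Ks v) → ∀ k t, n ≤ k →
      k + 1 + t = n + 1 + s + 1 → S.expect (n + 1 + s + 1) x
        (fun q => dist (S.readout ws k (q.drop t)) (S.comp (n + 1 + s + 1) q x)) ≤
        S.a ^ n * S.anchorBound ws x := by
    intro ws hws k t hk hN
    rw [← hN]
    refine (S.expect_dist_readout_drop_le hws k t x).trans ?_
    exact mul_le_mul_of_nonneg_right (pow_le_pow_of_le_one S.ha0.le S.ha1.le (by omega))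
      (S.anchorBound_nonneg ws x)
  calc S.expect (n + 1 + s + 1) x (S.deviationWord xs ys n s)
      ≤ S.expect (n + 1 + s + 1) x (fun q =>
          2 * dist (S.readout xs n (q.drop (s + 1))) (S.comp (n + 1 + s + 1) q x) +
            (dist (S.readout xs (n + 1) (q.drop s)) (S.comp (n + 1 + s + 1) q x) +
              dist (S.readout ys n (q.drop (s + 1))) (S.comp (n + 1 + s + 1) q x))) := by
        refine S.expect_mono fun q => ?_
        have := dist_triangle_right (S.readout xs n (q.drop (s + 1)))
          (S.readout xs (n + 1) (q.drop s)) (S.comp (n + 1 + s + 1) q x)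
        have := dist_triangle_right (S.readout xs n (q.drop (s + 1)))
          (S.readout ys n (q.drop (s + 1))) (S.comp (n + 1 + s + 1) q x)
        rw [deviationWord]
        linarith
    _ ≤ S.a ^ n * (3 * S.anchorBound xs x + S.anchorBound ys x) := by
        rw [S.expect_add, S.expect_add, S.expect_const_mul]
        have h₁ := readout_le hxs n (s + 1) le_rfl (by omega)
        have h₂ := readout_le hxs (n + 1) s (by omega) (by omega)
        have h₃ := readout_le hys n (s + 1) le_rfl (by omega)
        linarith

lemma measure_lt_deviation_le {P : ∀ m : ℤ, K → @Measure (ℤ → E) (Am E m)} (hP : IsKernel S P)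
    {c : ℝ} (hc : 0 < c) (hca : c ^ 2 = S.a) (n s : ℕ) (x : K) :
    P (-((n + 1 + s : ℕ) : ℤ)) x {σ | c ^ n < S.deviation xs ys n σ} ≤
      ENNReal.ofReal (c ^ n * (3 * S.anchorBound xs x + S.anchorBound ys x)) := by
  have hcn : 0 < c ^ n := pow_pos hc n
  rw [S.setOf_lt_deviation_eq_preimage_window xs ys, S.measure_preimage_window hP _ _ x
    (S.dependsOn_mem_setOf_lt_deviationWord xs ys c n s)]
  refine ENNReal.ofReal_le_ofReal ?_
  calc S.expect (n + 1 + s + 1) x ({q | c ^ n < S.deviationWord xs ys n s q}.indicator 1)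
      ≤ S.expect (n + 1 + s + 1) x (fun q => (c ^ n)⁻¹ * S.deviationWord xs ys n s q) := by
        refine S.expect_mono fun q => ?_
        by_cases hq : c ^ n < S.deviationWord xs ys n s q
        · simp only [Set.indicator_of_mem (show q ∈ {q | c ^ n < _} from hq), Pi.one_apply]
          rw [le_inv_mul_iff₀ hcn, mul_one]
          exact hq.le
        · simp only [Set.indicator_of_notMem (show q ∉ {q | c ^ n < _} from hq)]
          exact mul_nonneg (inv_nonneg.2 hcn.le) (by unfold deviationWord; positivity)
    _ ≤ (c ^ n)⁻¹ * (S.a ^ n * (3 * S.anchorBound xs x + S.anchorBound ys x)) := by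
        rw [S.expect_const_mul]
        exact mul_le_mul_of_nonneg_left (S.expect_deviationWord_le hxs hys n s x)
          (inv_nonneg.2 hcn.le)
    _ = c ^ n * (3 * S.anchorBound xs x + S.anchorBound ys x) := by
        rw [← hca, ← pow_mul, mul_comm 2 n, pow_mul]
        field_simp

end markov

end CMS

lemma StrictMono.exists_ge_mem_Ico {φ : ℕ → ℕ} (hφ : StrictMono φ) {T n : ℕ} (h : φ T ≤ n) :
    ∃ t ≥ T, n ∈ Finset.Ico (φ t) (φ (t + 1)) := by
  have hex : ∃ t, n < φ t := ⟨n + 1, Nat.lt_of_succ_le (hφ.id_le (n + 1))⟩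
  have hT : T < Nat.find hex := by
    by_contra! hle
    exact (Nat.find_spec hex).not_ge (h.trans' (hφ.monotone hle))
  refine ⟨Nat.find hex - 1, by omega, Finset.mem_Ico.2 ⟨?_, ?_⟩⟩
  · exact not_lt.1 (Nat.find_min hex (by omega))
  · rw [Nat.sub_add_cancel (by omega)]
    exact Nat.find_spec hex

lemma tendsto_lintegral_min_one_tsum_nat_add {α : Type*} [MeasurableSpace α] {μ : Measure α}
    [IsFiniteMeasure μ] {u : ℕ → α → ℝ≥0∞} (hu : ∀ n, Measurable (u n))
    (hsum : ∀ x, ∑' n, u n x ≠ ∞) :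
    Tendsto (fun l => ∫⁻ x, min 1 (∑' k, u (k + l) x) ∂μ) atTop (𝓝 0) := by
  simpa using tendsto_lintegral_of_dominated_convergence (μ := μ) (f := 0) 1
    (fun l => measurable_const.min (Measurable.tsum fun k => hu _))
    (fun l => Eventually.of_forall fun x => min_le_left _ _) (by simp [measure_ne_top])
    (Eventually.of_forall fun x => by
      simpa using tendsto_const_nhds.min (ENNReal.tendsto_sum_nat_add (u · x) (hsum x)))

section lift

variable {P : ∀ m : ℤ, K → @Measure (ℤ → E) (Am E m)} {ν : Measure K}

omit [Fintype E] [MetricSpace K] in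
lemma PhiM_mono {B B' : Set (ℤ → E)} (h : B ⊆ B') : PhiM P ν B ≤ PhiM P ν B' :=
  iInf_mono fun _ => iInf_mono fun _ => iInf_mono' fun hB' => ⟨h.trans hB', le_rfl⟩

omit [Fintype E] [MetricSpace K] in
lemma PhiM_le_tsum {lvl : ℕ → ℕ} (hlvl : Function.Injective lvl) {W : ℕ → Set (ℤ → E)}
    (hW : ∀ t, MeasurableSet[Am E (-(lvl t : ℤ))] (W t)) {B : Set (ℤ → E)}
    (hB : B ⊆ ⋃ t, W t) :
    PhiM P ν B ≤ ∑' t, liftMeas P (-(lvl t : ℤ)) ν (W t) := by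
  set A := Function.extend lvl W fun _ => ∅
  have hA : ∀ t, A (lvl t) = W t := hlvl.extend_apply W _
  have hA' : ∀ k, (¬∃ t, lvl t = k) → A k = ∅ := Function.extend_apply' _ _
  have hmeas : ∀ k : ℕ, MeasurableSet[Am E (-(k : ℤ))] (A k) := fun k => by
    by_cases hk : ∃ t, lvl t = k
    · obtain ⟨t, rfl⟩ := hk
      exact hA t ▸ hW t
    · exact hA' k hk ▸ @MeasurableSet.empty _ (Am E _)
  have hsum : (fun k : ℕ => liftMeas P (-(k : ℤ)) ν (A k)) =
      Function.extend lvl (fun t => liftMeas P (-(lvl t : ℤ)) ν (W t)) 0 := funext fun k => by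
    by_cases hk : ∃ t, lvl t = k
    · obtain ⟨t, rfl⟩ := hk
      rw [hlvl.extend_apply, hA]
    · rw [Function.extend_apply' _ _ _ hk, hA' k hk]
      simp [liftMeas]
  refine iInf₂_le_of_le A hmeas (iInf_le_of_le ?_ ?_)
  · exact hB.trans (Set.iUnion_mono' fun t => ⟨lvl t, (hA t).ge⟩)
  · rw [hsum, tsum_extend_zero hlvl]

omit [Fintype E] [MetricSpace K] in
/-- A Borel–Cantelli lemma for the lift outer measure. -/
lemma PhiM_eq_zero_of_frequently {lvl : ℕ → ℕ} (hlvl : Function.Injective lvl)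
    {W : ℕ → Set (ℤ → E)} (hW : ∀ t, MeasurableSet[Am E (-(lvl t : ℤ))] (W t))
    (hsum : ∑' t, liftMeas P (-(lvl t : ℤ)) ν (W t) ≠ ∞) {B : Set (ℤ → E)}
    (hB : ∀ σ ∈ B, ∃ᶠ t in atTop, σ ∈ W t) :
    PhiM P ν B = 0 := by
  refine nonpos_iff_eq_zero.1 (ge_of_tendsto' (ENNReal.tendsto_sum_nat_add _ hsum) fun T => ?_)
  refine PhiM_le_tsum (lvl := fun t => lvl (t + T)) (hlvl.comp (add_left_injective T))
    (fun t => hW _) fun σ hσ => ?_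
  obtain ⟨t, ht, hσt⟩ := Filter.frequently_atTop.1 (hB σ hσ) T
  exact Set.mem_iUnion.2 ⟨t - T, by rwa [Nat.sub_add_cancel ht]⟩

omit [Fintype E] [MetricSpace K] in
lemma liftMeas_biUnion_Ico_le (hP : ∀ m x, @IsProbabilityMeasure _ (Am E m) (P m x))
    {U : ℕ → Set (ℤ → E)} {u : ℕ → K → ℝ≥0∞}
    (hPU : ∀ (n m : ℕ) x, n < m → P (-(m : ℤ)) x (U n) ≤ u n x) (l m : ℕ) :
    liftMeas P (-(m : ℤ)) ν (⋃ n ∈ Finset.Ico l m, U n) ≤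
      ∫⁻ x, min 1 (∑' k, u (k + l) x) ∂ν := by
  refine lintegral_mono fun x => le_min ?_ ?_
  · have := hP (-(m : ℤ)) x
    exact prob_le_one
  · calc P _ x (⋃ n ∈ Finset.Ico l m, U n) ≤ ∑ n ∈ Finset.Ico l m, P (-(m : ℤ)) x (U n) :=
          measure_biUnion_finset_le _ _
      _ ≤ ∑ n ∈ Finset.Ico l m, u n x :=
          Finset.sum_le_sum fun n hn => hPU n m x (Finset.mem_Ico.1 hn).2
      _ ≤ ∑' k, u (k + l) x := by
          rw [Finset.sum_Ico_eq_sum_range]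
          simp_rw [add_comm l]
          exact ENNReal.sum_le_tsum _

omit [Fintype E] [MetricSpace K] in
lemma PhiM_setOf_frequently_eq_zero [IsFiniteMeasure ν]
    (hP : ∀ m x, @IsProbabilityMeasure _ (Am E m) (P m x)) {U : ℕ → Set (ℤ → E)}
    (hU : ∀ n, MeasurableSet[Am E (-((n + 1 : ℕ) : ℤ))] (U n)) {u : ℕ → K → ℝ≥0∞}
    (hu : ∀ n, Measurable (u n)) (hPU : ∀ (n m : ℕ) x, n < m → P (-(m : ℤ)) x (U n) ≤ u n x)
    (hsum : ∀ x, ∑' n, u n x ≠ ∞) :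
    PhiM P ν {σ | ∃ᶠ n in atTop, σ ∈ U n} = 0 := by
  -- `∑ n, u n` need not be `ν`-integrable; capping each block of events by `1` makes it so.
  obtain ⟨φ, hφ, hφtail⟩ := extraction_forall_of_eventually fun t : ℕ =>
    (tendsto_lintegral_min_one_tsum_nat_add (μ := ν) hu hsum).eventually
      (eventually_le_nhds (ENNReal.pow_pos (by norm_num : (0 : ℝ≥0∞) < 2⁻¹) t))
  have hW : ∀ t, MeasurableSet[Am E (-(φ (t + 1) : ℤ))] (⋃ n ∈ Finset.Ico (φ t) (φ (t + 1)), U n) :=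
    fun t => Finset.measurableSet_biUnion _ fun n hn =>
      Am_antitone (by simp only [Finset.mem_Ico] at hn; push_cast; omega) _ (hU n)
  refine PhiM_eq_zero_of_frequently (hφ.injective.comp (add_left_injective 1)) hW
    (ne_top_of_le_ne_top ?_ (ENNReal.tsum_le_tsum fun t =>
      (liftMeas_biUnion_Ico_le hP hPU _ _).trans (hφtail t))) fun σ hσ => ?_
  · rw [ENNReal.tsum_geometric, ENNReal.one_sub_inv_two, inv_inv]
    exact ENNReal.ofNat_ne_top
  · refine Filter.frequently_atTop.2 fun T => ?_
    obtain ⟨n, hn, hσn⟩ := Filter.frequently_atTop.1 hσ (φ T)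
    obtain ⟨t, ht, hnt⟩ := hφ.exists_ge_mem_Ico hn
    exact ⟨t, ht, Set.mem_biUnion hnt hσn⟩

end lift

lemma Metric.exists_tendsto_of_eventually_dist_le_pow {X : Type*} [PseudoMetricSpace X]
    [CompleteSpace X] {f g : ℕ → X} {c : ℝ} (hc₀ : 0 ≤ c) (hc₁ : c < 1)
    (h : ∀ᶠ n in atTop, dist (f n) (f (n + 1)) + dist (f n) (g n) ≤ c ^ n) :
    ∃ L, Tendsto f atTop (𝓝 L) ∧ Tendsto g atTop (𝓝 L) := by
  obtain ⟨N, hN⟩ := eventually_atTop.1 h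
  have hcauchy : CauchySeq fun n => f (n + N) := by
    refine cauchySeq_of_le_geometric c (c ^ N) hc₁ fun n => ?_
    have := hN (n + N) (by omega)
    rw [pow_add, mul_comm, Nat.add_right_comm] at this
    exact (le_add_of_nonneg_right dist_nonneg).trans this
  obtain ⟨L, hL⟩ := cauchySeq_tendsto_of_complete hcauchy
  have hf : Tendsto f atTop (𝓝 L) := (tendsto_add_atTop_iff_nat N).1 hL
  refine ⟨L, hf, hf.congr_dist (squeeze_zero' (Eventually.of_forall fun n => dist_nonneg) ?_
    (tendsto_pow_atTop_nhds_zero_of_lt_one hc₀ hc₁))⟩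
  filter_upwards [h] with n hn
  exact (le_add_of_nonneg_left dist_nonneg).trans hn

lemma ENNReal.tsum_ofReal_pow_mul_ne_top {c : ℝ} (hc₀ : 0 ≤ c) (hc₁ : c < 1) (r : ℝ) :
    ∑' n : ℕ, ENNReal.ofReal (c ^ n * r) ≠ ∞ := by
  have hc : ENNReal.ofReal c < 1 := ENNReal.ofReal_lt_one.2 hc₁
  simp_rw [ENNReal.ofReal_mul (pow_nonneg hc₀ _), ENNReal.ofReal_pow hc₀, ENNReal.tsum_mul_right,
    ENNReal.tsum_geometric]
  exact ENNReal.mul_ne_top (ENNReal.inv_ne_top.2 (tsub_pos_of_lt hc).ne') ENNReal.ofReal_ne_top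

namespace CMS

lemma nonempty_edge (S : CMS E V K) [Nonempty K] : Nonempty E := by
  obtain ⟨x⟩ := ‹Nonempty K›
  by_contra h
  rw [not_nonempty_iff] at h
  simpa using S.p_sum x

variable (S : CMS E V K)

lemma sqrt_a_lt_one : √S.a < 1 := (Real.sqrt_lt' one_pos).2 (by simpa using S.ha1)

variable [Fintype V] {P : ∀ m : ℤ, K → @Measure (ℤ → E) (Am E m)}
  {xs ys : V → K}

lemma PhiM_frequently_lt_deviation_eq_zero [BorelSpace K] (hP : IsKernel S P) (ν : Measure K)
    [IsProbabilityMeasure ν] (hxs : ∀ v, xs v ∈ S.Ks v) (hys : ∀ v, ys v ∈ S.Ks v) :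
    PhiM P ν {σ | ∃ᶠ n in atTop, √S.a ^ n < S.deviation xs ys n σ} = 0 := by
  have := nonempty_of_isProbabilityMeasure ν
  have : Inhabited E := Classical.inhabited_of_nonempty S.nonempty_edge
  have hc₀ : 0 < √S.a := Real.sqrt_pos.2 S.ha0
  let B : (V → K) → K → ℝ := fun ws x => ∑ v, dist x (ws v) + S.anchorSpread ws / (1 - S.a)
  refine PhiM_setOf_frequently_eq_zero hP.1
    (fun n => S.measurableSet_setOf_lt_deviation xs ys _ n 0)
    (u := fun n x => ENNReal.ofReal (√S.a ^ n * (3 * B xs x + B ys x))) (fun n => by fun_prop)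
    (fun n m x hnm => ?_) fun x => ENNReal.tsum_ofReal_pow_mul_ne_top hc₀.le S.sqrt_a_lt_one _
  obtain ⟨s, rfl⟩ : ∃ s, m = n + 1 + s := ⟨m - (n + 1), by omega⟩
  refine (S.measure_lt_deviation_le hxs hys hP hc₀ (Real.sq_sqrt S.ha0.le) n s x).trans
    (ENNReal.ofReal_le_ofReal ?_)
  have hB : ∀ ws, S.anchorBound ws x ≤ B ws x := fun ws =>
    add_le_add (S.anchorDist_le_sum ws x) le_rfl
  gcongr
  · exact hB xs
  · exact hB ys

end CMS

theorem statement11_general {E V K : Type*} [Fintype E] [Fintype V] [MetricSpace K] [CompleteSpace K]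
    [MeasurableSpace K] [BorelSpace K] (S : CMS E V K)
    (P : ∀ m : ℤ, K → @Measure (ℤ → E) (Am E m)) (hP : IsKernel S P)
    (ν : Measure K) [IsProbabilityMeasure ν]
    (xs ys : V → K) (hxs : ∀ v, xs v ∈ S.Ks v) (hys : ∀ v, ys v ∈ S.Ks v) :
    PhiM P ν {σ : ℤ → E | ¬ ∃ L : K,
      Tendsto (fun n : ℕ => S.Y xs (-(n : ℤ)) σ) atTop (nhds L) ∧
      Tendsto (fun n : ℕ => S.Y ys (-(n : ℤ)) σ) atTop (nhds L)} = 0 := by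
  refine nonpos_iff_eq_zero.1 <| (PhiM_mono fun σ hσ => ?_).trans
    (S.PhiM_frequently_lt_deviation_eq_zero hP ν hxs hys).le
  by_contra hfreq
  have hsmall : ∀ᶠ n in atTop, S.deviation xs ys n σ ≤ √S.a ^ n := by
    simpa [not_frequently] using hfreq
  exact hσ (Metric.exists_tendsto_of_eventually_dist_le_pow (Real.sqrt_nonneg _)
    S.sqrt_a_lt_one hsmall)

/-- under Dini-continuity and the lower bound `δ > 0` on the probability
functions, for every Borel probability `ν` and all `x_i, y_i ∈ K_i`: `Φ(ν)`-a.e. the limit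
defining `F_{x_1…x_N}` exists and agrees with the one defining `F_{y_1…y_N}`. -/
theorem statement11 {E V K : Type*} [Fintype E] [Fintype V] [MetricSpace K] [CompleteSpace K]
    [MeasurableSpace K] [BorelSpace K] (S : CMS E V K)
    (P : ∀ m : ℤ, K → @Measure (ℤ → E) (Am E m)) (hP : IsKernel S P)
    (φ : E → ℝ → ℝ) (hφmono : ∀ e, Monotone (φ e)) (hφ0 : ∀ e t, 0 ≤ φ e t)
    (hmod : ∀ e, ∀ u ∈ S.Ks (S.i e), ∀ v ∈ S.Ks (S.i e), ∀ t : ℝ,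
      dist u v ≤ t → |S.p e u - S.p e v| ≤ φ e t)
    (hdini : ∀ e, ∃ c > (0 : ℝ), MeasureTheory.IntegrableOn (fun t => φ e t / t) (Set.Ioc 0 c))
    (δ : ℝ) (hδ : 0 < δ) (hlow : ∀ e, ∀ u ∈ S.Ks (S.i e), δ ≤ S.p e u)
    (ν : Measure K) [IsProbabilityMeasure ν]
    (xs ys : V → K) (hxs : ∀ v, xs v ∈ S.Ks v) (hys : ∀ v, ys v ∈ S.Ks v) :
    PhiM P ν {σ : ℤ → E | ¬ ∃ L : K,
      Tendsto (fun n : ℕ => S.Y xs (-(n : ℤ)) σ) atTop (nhds L) ∧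
      Tendsto (fun n : ℕ => S.Y ys (-(n : ℤ)) σ) atTop (nhds L)} = 0 :=
  statement11_general S P hP ν xs ys hxs hys
end

section
/- In ℝ² with the ℓ¹-norm, with K₁ = {(x,y) : y ≥ 1/2}, K₂ = {(x,y) : y ≤ −1/2}, maps w₁(x,y) = (−x/2 − 1, −3y/2 + 1/4), w₂(x,y) = (−3x/2 + 1, y/4 + 3/8), w₃(x,y) = (−|x|/2 + 1, −3y/4 + 1/8), and probability functions p₁(x,y) = (sin²‖(x,y)‖₁/15 + 53/105)·1_{K₁}, p₂(x,y) = (cos²‖(x,y)‖₁/15 + 3/7)·1_{K₁}, p₃ = 1_{K₂}, the family (K_{i(e)}, w_e, p_e) with i(1)=i(2)=1, i(3)=2 satisfies the average contractiveness condition with rate 209/210: for all u,v ∈ K₁, p₁(u)‖w₁u − w₁v‖₁ + p₂(u)‖w₂u − w₂v‖₁ ≤ (209/210)‖u−v‖₁, and for all u,v ∈ K₂, ‖w₃u − w₃v‖₁ ≤ (209/210)‖u−v‖₁ (indeed ≤ (3/4)‖u−v‖₁). -/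
noncomputable section

/-- `K₁ = {(x,y) : y ≥ 1/2}`. -/
def K1 : Set (ℝ × ℝ) := {u | 1 / 2 ≤ u.2}

/-- `K₂ = {(x,y) : y ≤ -1/2}`. -/
def K2 : Set (ℝ × ℝ) := {u | u.2 ≤ -(1 / 2)}

/-- The ℓ¹-norm on ℝ². -/
def nrm (u : ℝ × ℝ) : ℝ := |u.1| + |u.2|

def w1 (u : ℝ × ℝ) : ℝ × ℝ := (-u.1 / 2 - 1, -(3 * u.2) / 2 + 1 / 4)

def w2 (u : ℝ × ℝ) : ℝ × ℝ := (-(3 * u.1) / 2 + 1, u.2 / 4 + 3 / 8)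

def w3 (u : ℝ × ℝ) : ℝ × ℝ := (-|u.1| / 2 + 1, -(3 * u.2) / 4 + 1 / 8)

def p1 (u : ℝ × ℝ) : ℝ := Real.sin (nrm u) ^ 2 / 15 + 53 / 105

def p2 (u : ℝ × ℝ) : ℝ := Real.cos (nrm u) ^ 2 / 15 + 3 / 7

/-- the Markov system of Example 5 satisfies the average contractiveness
condition with rate `209/210` on `K₁`, and `w₃` contracts `K₂` with ratio `3/4 ≤ 209/210`. -/
theorem statement16 :
    (∀ u v : ℝ × ℝ, u ∈ K1 → v ∈ K1 →
      p1 u * nrm (w1 u - w1 v) + p2 u * nrm (w2 u - w2 v) ≤ (209 / 210) * nrm (u - v)) ∧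
    (∀ u v : ℝ × ℝ, u ∈ K2 → v ∈ K2 →
      nrm (w3 u - w3 v) ≤ (3 / 4) * nrm (u - v) ∧
      nrm (w3 u - w3 v) ≤ (209 / 210) * nrm (u - v)) := by
  constructor
  · intro u v _ _
    have hsc : Real.sin (nrm u) ^ 2 + Real.cos (nrm u) ^ 2 = 1 :=
      Real.sin_sq_add_cos_sq _
    have hs0 : (0:ℝ) ≤ Real.sin (nrm u) ^ 2 := sq_nonneg _
    have hc0 : (0:ℝ) ≤ Real.cos (nrm u) ^ 2 := sq_nonneg _
    have e1 : nrm (w1 u - w1 v) = |u.1 - v.1| / 2 + 3 * |u.2 - v.2| / 2 := by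
      simp only [nrm, w1, Prod.fst_sub, Prod.snd_sub]
      rw [show -u.1 / 2 - 1 - (-v.1 / 2 - 1) = -(u.1 - v.1) / 2 by ring,
          show -(3 * u.2) / 2 + 1 / 4 - (-(3 * v.2) / 2 + 1 / 4) = -(3 * (u.2 - v.2)) / 2 by ring,
          abs_div, abs_div, abs_neg, abs_neg, abs_mul]
      simp [abs_of_nonneg]
    have e2 : nrm (w2 u - w2 v) = 3 * |u.1 - v.1| / 2 + |u.2 - v.2| / 4 := by
      simp only [nrm, w2, Prod.fst_sub, Prod.snd_sub]
      rw [show -(3 * u.1) / 2 + 1 - (-(3 * v.1) / 2 + 1) = -(3 * (u.1 - v.1)) / 2 by ring,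
          show u.2 / 4 + 3 / 8 - (v.2 / 4 + 3 / 8) = (u.2 - v.2) / 4 by ring,
          abs_div, abs_div, abs_neg, abs_mul]
      simp [abs_of_nonneg]
    have e3 : nrm (u - v) = |u.1 - v.1| + |u.2 - v.2| := by
      simp [nrm]
    rw [e1, e2, e3, p1, p2]
    nlinarith [abs_nonneg (u.1 - v.1), abs_nonneg (u.2 - v.2),
      mul_nonneg hs0 (abs_nonneg (u.1 - v.1)), mul_nonneg hs0 (abs_nonneg (u.2 - v.2)),
      mul_nonneg hc0 (abs_nonneg (u.1 - v.1)), mul_nonneg hc0 (abs_nonneg (u.2 - v.2))]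
  · intro u v _ _
    have key : nrm (w3 u - w3 v) ≤ (3 / 4) * nrm (u - v) := by
      have h1 : abs (|u.1| - |v.1|) ≤ |u.1 - v.1| := abs_abs_sub_abs_le_abs_sub _ _
      have e1 : nrm (w3 u - w3 v) = abs (|u.1| - |v.1|) / 2 + 3 * |u.2 - v.2| / 4 := by
        simp only [nrm, w3, Prod.fst_sub, Prod.snd_sub]
        rw [show -|u.1| / 2 + 1 - (-|v.1| / 2 + 1) = -((|u.1|) - |v.1|) / 2 by ring,
            show -(3 * u.2) / 4 + 1 / 8 - (-(3 * v.2) / 4 + 1 / 8) = -(3 * (u.2 - v.2)) / 4 by ring,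
            abs_div, abs_div, abs_neg, abs_neg, abs_mul]
        simp [abs_of_nonneg]
      have e3 : nrm (u - v) = |u.1 - v.1| + |u.2 - v.2| := by simp [nrm]
      rw [e1, e3]
      have := abs_nonneg (u.1 - v.1)
      linarith
    refine ⟨key, key.trans ?_⟩
    have : (0:ℝ) ≤ nrm (u - v) := by
      simp only [nrm]
      positivity
    nlinarith

end
end
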